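/- arXiv:1108.0547 — 6 statements merged into one kernel-verified Lean document; each statement's English description precedes it below -/
import Mathlib

section
/- Let f(X) be a monic polynomial in ℤ[X] of degree n ≥ 1, and let I be the ideal of ℤ[X₁,…,X_m] generated by f(X₁),…,f(X_m). Then there exists a monic polynomial h(X) ∈ ℤ[X] of degree at most n^m such that h(X₁⋯X_m) ∈ I. -/
/-! Modulo `I` every `Xᵢ` is a root of the monic `f`, so the subalgebra generated by `Xᵢ` is
spanned by `1, Xᵢ, …, Xᵢ^(n-1)` (reduce modulo `f`), and the quotient ring, being the product
of these subalgebras, is spanned over `ℤ` by the `n^m` monomials `∏ Xᵢ^(aᵢ)` with `aᵢ < n`.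
Multiplication by `X₁⋯X_m` on a module spanned by `n^m` elements is represented by an
`n^m × n^m` integer matrix, whose characteristic polynomial is the required `h` by
Cayley–Hamilton. -/

open Polynomial MvPolynomial

section

open scoped Pointwise

variable {R A : Type*} [CommRing R] [CommRing A] [Algebra R A]

theorem Module.End.exists_monic_natDegree_eq_aeval_eq_zero [Nontrivial R] {ι : Type*} [Fintype ι]
    {M : Type*} [AddCommGroup M] [Module R M] (b : ι → M)
    (hb : Submodule.span R (Set.range b) = ⊤) (φ : Module.End R M) :
    ∃ p : R[X], p.Monic ∧ p.natDegree = Fintype.card ι ∧ aeval φ p = 0 := by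
  classical
  obtain ⟨B, hB⟩ := Matrix.isRepresentation.toEnd_surjective R b hb φ
  refine ⟨B.1.charpoly, B.1.charpoly_monic, B.1.charpoly_natDegree_eq_dim, ?_⟩
  rw [← hB, aeval_algHom_apply, ← map_zero (Matrix.isRepresentation.toEnd R b hb)]
  congr 1
  ext1
  rw [aeval_subalgebra_coe, Matrix.aeval_self_charpoly, Subalgebra.coe_zero]

theorem exists_monic_natDegree_eq_aeval_eq_zero_of_span_eq_top [Nontrivial R] {ι : Type*}
    [Fintype ι] {b : ι → A} (hb : Submodule.span R (Set.range b) = ⊤) (a : A) :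
    ∃ p : R[X], p.Monic ∧ p.natDegree = Fintype.card ι ∧ aeval a p = 0 := by
  obtain ⟨p, hp, hdeg, hφ⟩ :=
    Module.End.exists_monic_natDegree_eq_aeval_eq_zero b hb (Algebra.lmul R A a)
  refine ⟨p, hp, hdeg, ?_⟩
  rw [aeval_algHom_apply] at hφ
  simpa using congr($hφ 1)

theorem toSubmodule_adjoin_singleton_le_span_pow [Nontrivial R] {p : R[X]} (hp : p.Monic)
    {x : A} (hx : aeval x p = 0) :
    Subalgebra.toSubmodule (Algebra.adjoin R {x}) ≤
      Submodule.span R (Set.range fun k : Fin p.natDegree => x ^ (k : ℕ)) := by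
  intro y hy
  rw [Subalgebra.mem_toSubmodule, Algebra.adjoin_singleton_eq_range_aeval] at hy
  obtain ⟨q, rfl⟩ := hy
  have hlt : (q %ₘ p).degree < p.natDegree :=
    (degree_modByMonic_lt q hp).trans_le degree_le_natDegree
  rw [AlgHom.toRingHom_eq_coe, RingHom.coe_coe, ← aeval_modByMonic_eq_self_of_root hx,
    Polynomial.aeval_def, Polynomial.eval₂_eq_sum, Polynomial.sum_def]
  refine Submodule.sum_mem _ fun k hk => Algebra.smul_def (R := R) _ (x ^ k) ▸
    Submodule.smul_mem _ _ (Submodule.subset_span ?_)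
  have hk : k < p.natDegree := by exact_mod_cast (le_degree_of_mem_supp k hk).trans_lt hlt
  exact ⟨⟨k, hk⟩, rfl⟩

theorem toSubmodule_iSup_eq_prod {ι : Type*} [Fintype ι] (S : ι → Subalgebra R A) :
    Subalgebra.toSubmodule (⨆ i, S i) = ∏ i, Subalgebra.toSubmodule (S i) := by
  classical
  rw [← Finset.sup_univ_eq_iSup]
  induction (Finset.univ : Finset ι) using Finset.induction_on with
  | empty => exact Algebra.toSubmodule_bot
  | insert i s hi ih =>
    rw [Finset.sup_insert, Finset.prod_insert hi, ← ih, Subalgebra.mul_toSubmodule]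

theorem span_range_prod_pow_eq_top [Nontrivial R] {ι : Type*} [Fintype ι] {x : ι → A}
    (hx : Algebra.adjoin R (Set.range x) = ⊤) {p : R[X]} (hp : p.Monic)
    (hroot : ∀ i, aeval (x i) p = 0) :
    Submodule.span R (Set.range fun a : ι → Fin p.natDegree => ∏ i, x i ^ (a i : ℕ)) = ⊤ := by
  rw [eq_top_iff, ← Algebra.top_toSubmodule, ← hx, ← Set.iUnion_singleton_eq_range,
    Algebra.adjoin_iUnion, toSubmodule_iSup_eq_prod]
  calc ∏ i, Subalgebra.toSubmodule (Algebra.adjoin R {x i})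
      ≤ ∏ i, Submodule.span R (Set.range fun k : Fin p.natDegree => x i ^ (k : ℕ)) :=
        Finset.prod_le_prod' fun i _ => toSubmodule_adjoin_singleton_le_span_pow hp (hroot i)
    _ = Submodule.span R (∏ i, Set.range fun k : Fin p.natDegree => x i ^ (k : ℕ)) :=
        Submodule.prod_span _ _
    _ ≤ _ := by
        refine Submodule.span_mono fun y hy => ?_
        obtain ⟨g, hg, rfl⟩ := (Set.mem_fintype_prod _ _).mp hy
        choose a ha using hg
        exact ⟨a, Finset.prod_congr rfl fun i _ => ha i⟩

end

theorem stmt2_general (m n : ℕ) (f : Polynomial ℤ) (hf : f.Monic)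
    (hdeg : f.natDegree = n)
    (I : Ideal (MvPolynomial (Fin m) ℤ))
    (hI : I = Ideal.span
      (Set.range fun i : Fin m => Polynomial.aeval (MvPolynomial.X i) f)) :
    ∃ h : Polynomial ℤ, h.Monic ∧ h.natDegree ≤ n ^ m ∧
      Polynomial.aeval (∏ i : Fin m, MvPolynomial.X i :
        MvPolynomial (Fin m) ℤ) h ∈ I := by
  set π := Ideal.Quotient.mkₐ ℤ I
  have hroot : ∀ i, aeval (π (X i)) f = 0 := fun i => by
    rw [Polynomial.aeval_algHom_apply, Ideal.Quotient.mkₐ_eq_mk,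
      Ideal.Quotient.eq_zero_iff_mem, hI]
    exact Ideal.subset_span ⟨i, rfl⟩
  have hgen : Algebra.adjoin ℤ (Set.range fun i => π (X i)) = ⊤ := by
    rw [Set.range_comp' π X, ← AlgHom.map_adjoin, adjoin_range_X, Algebra.map_top,
      AlgHom.range_eq_top]
    exact Ideal.Quotient.mkₐ_surjective ℤ I
  obtain ⟨h, hmonic, hdeg', hzero⟩ := exists_monic_natDegree_eq_aeval_eq_zero_of_span_eq_top
    (span_range_prod_pow_eq_top hgen hf hroot) (π (∏ i, X i))
  refine ⟨h, hmonic, by simp [hdeg', hdeg], ?_⟩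
  rwa [Polynomial.aeval_algHom_apply, Ideal.Quotient.mkₐ_eq_mk,
    Ideal.Quotient.eq_zero_iff_mem] at hzero

/-- If `f ∈ ℤ[X]` is monic of degree `n ≥ 1` and `I` is the ideal
of `ℤ[X₁,…,X_m]` generated by `f(X₁), …, f(X_m)`, then there is a monic
`h ∈ ℤ[X]` of degree at most `n^m` with `h(X₁⋯X_m) ∈ I`. -/
theorem stmt2 (m n : ℕ) (hn : 1 ≤ n) (f : Polynomial ℤ) (hf : f.Monic)
    (hdeg : f.natDegree = n)
    (I : Ideal (MvPolynomial (Fin m) ℤ))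
    (hI : I = Ideal.span
      (Set.range fun i : Fin m => Polynomial.aeval (MvPolynomial.X i) f)) :
    ∃ h : Polynomial ℤ, h.Monic ∧ h.natDegree ≤ n ^ m ∧
      Polynomial.aeval (∏ i : Fin m, MvPolynomial.X i :
        MvPolynomial (Fin m) ℤ) h ∈ I :=
  stmt2_general m n f hf hdeg I hI
end

section
/- Let A be a finite abelian p-group (written multiplicatively) and let g be an automorphism of A. Suppose there are monic polynomials witnessing: (a) [A,_r g] ≤ A^p, meaning (g−1)^r annihilates A/A^p, for all powers A^{p^i} in place of A as well (i.e., (g−1)^r maps A^{p^i} into A^{p^{i+1}} for all i ≥ 0), and (b) A^{p^s (g^k−1)^ℓ} = 1 for some integers s, k, ℓ. Then [A,_n g^k] = 1 where n = s·r + ℓ, i.e., (g^k − 1)^{sr+ℓ} annihilates A. -/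
/-!
Write `e = g^k - 1`. Since `e = (1 + g + ⋯ + g^(k-1)) (g - 1)` with commuting factors, `e^r` is a
multiple of `(g - 1)^r` and so, like it, maps `p^i • A` into `p^(i+1) • A`. Iterating, `e^(s r)`
maps `A` into `p^s • A`, which `e^ℓ` kills by (b).
-/

section

variable {A : Type*}

def RaisesPowerFiltration [AddCommMonoid A] (m : ℕ) (φ : AddMonoid.End A) : Prop :=
  ∀ (i : ℕ) (a : A), ∃ b : A, φ (m ^ i • a) = m ^ (i + 1) • b

namespace RaisesPowerFiltration

variable [AddCommMonoid A] {m : ℕ} {φ : AddMonoid.End A}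

theorem mul_left (h : RaisesPowerFiltration m φ) (ψ : AddMonoid.End A) :
    RaisesPowerFiltration m (ψ * φ) := by
  intro i a
  obtain ⟨b, hb⟩ := h i a
  exact ⟨ψ b, by rw [AddMonoid.End.coe_mul, Function.comp_apply, hb, map_nsmul]⟩

theorem exists_pow_apply_eq_nsmul (h : RaisesPowerFiltration m φ) (j : ℕ) (a : A) :
    ∃ b : A, (φ ^ j) a = m ^ j • b := by
  induction j with
  | zero => exact ⟨a, by simp⟩
  | succ j ih =>
    obtain ⟨b, hb⟩ := ih
    obtain ⟨c, hc⟩ := h j b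
    exact ⟨c, by rw [pow_succ', AddMonoid.End.coe_mul, Function.comp_apply, hb, hc]⟩

end RaisesPowerFiltration

theorem pow_sub_one_pow_eq_geomSum_pow_mul {R : Type*} [Ring R] (g : R) (k r : ℕ) :
    (g ^ k - 1) ^ r = (∑ i ∈ Finset.range k, g ^ i) ^ r * (g - 1) ^ r := by
  have hcomm : Commute (∑ i ∈ Finset.range k, g ^ i) (g - 1) :=
    (Commute.sum_left _ _ _ fun i _ => Commute.pow_self g i).sub_right (Commute.one_right _)
  rw [← geom_sum_mul, hcomm.mul_pow]

theorem RaisesPowerFiltration.pow_sub_one_pow [AddCommGroup A] {m : ℕ} {g : AddMonoid.End A}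
    {r : ℕ} (h : RaisesPowerFiltration m ((g - 1) ^ r)) (k : ℕ) :
    RaisesPowerFiltration m ((g ^ k - 1) ^ r) := by
  rw [pow_sub_one_pow_eq_geomSum_pow_mul]
  exact h.mul_left _

end

theorem stmt4_general (p : ℕ) (A : Type*) [AddCommGroup A]
    (g : (AddMonoid.End A)ˣ) (r s k ℓ : ℕ)
    (ha : ∀ (i : ℕ) (a : A), ∃ b : A,
      (((g : AddMonoid.End A) - 1) ^ r) ((p ^ i : ℕ) • a) = (p ^ (i + 1) : ℕ) • b)
    (hb : ∀ a : A, (p ^ s : ℕ) • ((((g : AddMonoid.End A) ^ k - 1) ^ ℓ) a) = 0) :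
    ∀ a : A, (((g : AddMonoid.End A) ^ k - 1) ^ (s * r + ℓ)) a = 0 := by
  intro a
  have he : RaisesPowerFiltration p (((g : AddMonoid.End A) ^ k - 1) ^ r) :=
    RaisesPowerFiltration.pow_sub_one_pow ha k
  obtain ⟨b, hab⟩ := he.exists_pow_apply_eq_nsmul s a
  rw [add_comm, pow_add, AddMonoid.End.coe_mul, Function.comp_apply, pow_mul', hab, map_nsmul]
  exact hb b

/-- Let `A` be a finite abelian `p`-group (written additively here)
and `g` an automorphism of `A` (a unit of `End(A)`). Suppose
(a) `(g - 1)^r` maps `A^{p^i}` (i.e. `p^i • A`) into `A^{p^{i+1}}` for all `i ≥ 0`, and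
(b) `p^s • (g^k - 1)^ℓ` annihilates `A`.
Then `(g^k - 1)^{s·r + ℓ}` annihilates `A`, i.e. `[A,_n g^k] = 1` with `n = s·r + ℓ`. -/
theorem stmt4 (p : ℕ) (hp : p.Prime) (A : Type*) [AddCommGroup A] [Finite A]
    (hpA : ∀ a : A, ∃ i : ℕ, (p ^ i : ℕ) • a = 0)
    (g : (AddMonoid.End A)ˣ) (r s k ℓ : ℕ)
    (ha : ∀ (i : ℕ) (a : A), ∃ b : A,
      (((g : AddMonoid.End A) - 1) ^ r) ((p ^ i : ℕ) • a) = (p ^ (i + 1) : ℕ) • b)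
    (hb : ∀ a : A, (p ^ s : ℕ) • ((((g : AddMonoid.End A) ^ k - 1) ^ ℓ) a) = 0) :
    ∀ a : A, (((g : AddMonoid.End A) ^ k - 1) ^ (s * r + ℓ)) a = 0 :=
  stmt4_general p A g r s k ℓ ha hb
end

section
/- Let G be a group with a normal subgroup N such that N is nilpotent of class k and G/N' is nilpotent of class c, where N' is the derived subgroup of N. Then G is nilpotent, of class bounded by a function of k and c only. -/
/-!
Hall's argument, with `γᵢ` the lower central series (Mathlib's `lowerCentralSeries n` is `γₙ₊₁`).
Since `G/N'` has class `c`, `γ_{c+1}(G) ≤ N'`. Commuting `γᵢ(N)` with `j` further copies of `G`,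
the three subgroups lemma distributes the copies of `G` among the `i` entries from `N`; if
`j ≥ i * c`, one entry absorbs at least `c` of them and so falls into `N'`, which pushes the
commutator into `γᵢ₊₁(N)`. Iterating over `i`, `γ_{c·C(i+1,2)+1}(G) ≤ γᵢ(N)`, and `γₖ₊₁(N) = 1`.
-/

namespace Subgroup

variable {G : Type*} [Group G]

theorem commutator_commutator_le_of_rotate {H₁ H₂ H₃ N : Subgroup G} [N.Normal]
    (h₁ : ⁅⁅H₂, H₃⁆, H₁⁆ ≤ N) (h₂ : ⁅⁅H₃, H₁⁆, H₂⁆ ≤ N) : ⁅⁅H₁, H₂⁆, H₃⁆ ≤ N := by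
  rw [← QuotientGroup.ker_mk' N, ← map_eq_bot_iff, map_commutator, map_commutator] at *
  exact commutator_commutator_eq_bot_of_rotate h₁ h₂

theorem commutator_iSup_left_le {ι : Sort*} {H : ι → Subgroup G} {K N : Subgroup G} [N.Normal]
    (h : ∀ i, ⁅H i, K⁆ ≤ N) : ⁅⨆ i, H i, K⁆ ≤ N := by
  have key (L : Subgroup G) : ⁅L, K⁆ ≤ N ↔
      L.map (QuotientGroup.mk' N) ≤ centralizer (K.map (QuotientGroup.mk' N)) := by
    rw [← commutator_eq_bot_iff_le_centralizer, ← map_commutator, map_eq_bot_iff,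
      QuotientGroup.ker_mk']
  rw [key, map_iSup, iSup_le_iff]
  exact fun i => (key _).1 (h i)

theorem commutator_top_lowerCentralSeries_le (j : ℕ) : ∀ i : ℕ,
    ⁅(⊤ : Subgroup G).lowerCentralSeries i, (⊤ : Subgroup G).lowerCentralSeries j⁆ ≤
      (⊤ : Subgroup G).lowerCentralSeries (i + j + 1) := by
  induction j with
  | zero => exact fun i => le_rfl
  | succ j ih =>
    intro i
    rw [lowerCentralSeries_succ, commutator_comm]
    apply commutator_commutator_le_of_rotate
    · rw [commutator_comm ⊤, ← lowerCentralSeries_succ]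
      convert ih (i + 1) using 2
      omega
    · exact commutator_mono (ih i) le_rfl

theorem commutator_lowerCentralSeries_le (S : Subgroup G) (i j : ℕ) :
    ⁅S.lowerCentralSeries i, S.lowerCentralSeries j⁆ ≤ S.lowerCentralSeries (i + j + 1) := by
  rw [← top_subtype_lowerCentralSeries S i, ← top_subtype_lowerCentralSeries S j,
    ← top_subtype_lowerCentralSeries S, ← map_commutator]
  exact map_mono (commutator_top_lowerCentralSeries_le j i)

theorem top_lowerCentralSeries_le_of_quotient {M : Subgroup G} [M.Normal] {c : ℕ}
    (h : (⊤ : Subgroup (G ⧸ M)).lowerCentralSeries c = ⊥) :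
    (⊤ : Subgroup G).lowerCentralSeries c ≤ M := by
  rw [← QuotientGroup.ker_mk' M, ← map_eq_bot_iff, map_lowerCentralSeries,
    map_top_of_surjective _ (QuotientGroup.mk'_surjective M), h]

variable (N : Subgroup G)

def topCommutatorSeries : ℕ → Subgroup G
  | 0 => N
  | j + 1 => ⁅topCommutatorSeries j, ⊤⁆

/-- Generated by certain commutators with `i + 1` entries from `N` and `j` further entries
from `G`. -/
def weightedCommutator : ℕ → ℕ → Subgroup G
  | 0, j => N.topCommutatorSeries j
  | i + 1, j => ⨆ l, ⁅weightedCommutator i l, N.topCommutatorSeries (j - l)⁆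

theorem topCommutatorSeries_succ (j : ℕ) :
    N.topCommutatorSeries (j + 1) = ⁅N.topCommutatorSeries j, ⊤⁆ := rfl

theorem topCommutatorSeries_le_top_lowerCentralSeries (j : ℕ) :
    N.topCommutatorSeries j ≤ (⊤ : Subgroup G).lowerCentralSeries j := by
  induction j with
  | zero => exact le_top
  | succ j ih => exact commutator_mono ih le_rfl

theorem weightedCommutator_zero (j : ℕ) :
    N.weightedCommutator 0 j = N.topCommutatorSeries j := rfl

theorem weightedCommutator_succ (i j : ℕ) : N.weightedCommutator (i + 1) j =
    ⨆ l, ⁅N.weightedCommutator i l, N.topCommutatorSeries (j - l)⁆ := rfl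

theorem commutator_le_weightedCommutator_succ (i j l : ℕ) :
    ⁅N.weightedCommutator i l, N.topCommutatorSeries (j - l)⁆ ≤ N.weightedCommutator (i + 1) j :=
  le_iSup (fun l => ⁅N.weightedCommutator i l, N.topCommutatorSeries (j - l)⁆) l

theorem lowerCentralSeries_le_weightedCommutator (i : ℕ) :
    N.lowerCentralSeries i ≤ N.weightedCommutator i 0 := by
  induction i with
  | zero => exact le_rfl
  | succ i ih =>
    exact (commutator_mono ih le_rfl).trans (N.commutator_le_weightedCommutator_succ i 0 0)

variable [N.Normal]

instance topCommutatorSeries_normal (j : ℕ) : (N.topCommutatorSeries j).Normal := by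
  induction j with
  | zero => assumption
  | succ j _ => rw [topCommutatorSeries_succ]; infer_instance

theorem topCommutatorSeries_antitone : Antitone N.topCommutatorSeries :=
  antitone_nat_of_succ_le fun _ => commutator_le_left _ _

theorem topCommutatorSeries_le_self (j : ℕ) : N.topCommutatorSeries j ≤ N :=
  N.topCommutatorSeries_antitone j.zero_le

instance weightedCommutator_normal (i j : ℕ) : (N.weightedCommutator i j).Normal := by
  induction i generalizing j with
  | zero => rw [weightedCommutator_zero]; infer_instance
  | succ i _ => rw [weightedCommutator_succ]; infer_instance

theorem weightedCommutator_le_lowerCentralSeries (i j : ℕ) :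
    N.weightedCommutator i j ≤ N.lowerCentralSeries i := by
  induction i generalizing j with
  | zero => exact N.topCommutatorSeries_le_self j
  | succ i ih =>
    exact iSup_le fun l => commutator_mono (ih l) (N.topCommutatorSeries_le_self _)

theorem commutator_weightedCommutator_top_le (i j : ℕ) :
    ⁅N.weightedCommutator i j, ⊤⁆ ≤ N.weightedCommutator i (j + 1) := by
  induction i generalizing j with
  | zero => exact le_rfl
  | succ i ih =>
    refine commutator_iSup_left_le fun l => commutator_commutator_le_of_rotate ?_ ?_
    · rw [← topCommutatorSeries_succ, commutator_comm]
      refine (commutator_mono le_rfl (N.topCommutatorSeries_antitone ?_)).trans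
        (N.commutator_le_weightedCommutator_succ i (j + 1) l)
      omega
    · rw [commutator_comm ⊤]
      refine (commutator_mono (ih l) le_rfl).trans ?_
      simpa only [Nat.add_sub_add_right] using
        N.commutator_le_weightedCommutator_succ i (j + 1) (l + 1)

theorem top_lowerCentralSeries_add_le_weightedCommutator {a i : ℕ}
    (h : (⊤ : Subgroup G).lowerCentralSeries a ≤ N.weightedCommutator i 0) (j : ℕ) :
    (⊤ : Subgroup G).lowerCentralSeries (a + j) ≤ N.weightedCommutator i j := by
  induction j with
  | zero => exact h
  | succ j ih =>
    exact (commutator_mono ih le_rfl).trans (N.commutator_weightedCommutator_top_le i j)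

/-- Pigeonhole: if `j ≥ (i + 1) * c` copies of `G` are shared among `i + 1` entries from `N`,
one entry receives at least `c` of them and so lies in `N'`. -/
theorem weightedCommutator_le_lowerCentralSeries_succ {c : ℕ}
    (hc : N.topCommutatorSeries c ≤ N.lowerCentralSeries 1) (i j : ℕ) (hj : (i + 1) * c ≤ j) :
    N.weightedCommutator i j ≤ N.lowerCentralSeries (i + 1) := by
  induction i generalizing j with
  | zero => exact (N.topCommutatorSeries_antitone (by omega)).trans hc
  | succ i ih =>
    rw [weightedCommutator_succ]
    refine iSup_le fun l => ?_
    by_cases hl : c ≤ j - l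
    · exact (commutator_mono (N.weightedCommutator_le_lowerCentralSeries i l)
        ((N.topCommutatorSeries_antitone hl).trans hc)).trans
        (N.commutator_lowerCentralSeries_le i 1)
    · exact commutator_mono (ih l (by rw [add_mul] at hj; omega)) (N.topCommutatorSeries_le_self _)

theorem top_lowerCentralSeries_le_lowerCentralSeries {c : ℕ}
    (hc : (⊤ : Subgroup G).lowerCentralSeries c ≤ N.lowerCentralSeries 1) (i : ℕ) :
    (⊤ : Subgroup G).lowerCentralSeries (c * (i + 2).choose 2) ≤ N.lowerCentralSeries (i + 1) := by
  induction i with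
  | zero => simpa using hc
  | succ i ih =>
    have hV : N.topCommutatorSeries c ≤ N.lowerCentralSeries 1 :=
      (N.topCommutatorSeries_le_top_lowerCentralSeries c).trans hc
    have hS : c * (i + 3).choose 2 = c * (i + 2).choose 2 + (i + 2) * c := by
      rw [Nat.choose_succ_succ, Nat.choose_one_right]; ring
    rw [hS]
    exact (N.top_lowerCentralSeries_add_le_weightedCommutator
      (ih.trans (N.lowerCentralSeries_le_weightedCommutator (i + 1))) _).trans
      (N.weightedCommutator_le_lowerCentralSeries_succ hV (i + 1) _ le_rfl)

end Subgroup

/-- P. Hall's nilpotency criterion: there is a function `F` such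
that whenever `N` is a normal subgroup of a group `G`, `N` is nilpotent of
class at most `k`, and `G/N'` is nilpotent of class at most `c`, then `G` is
nilpotent of class at most `F k c`. -/
theorem stmt6 :
    ∃ F : ℕ → ℕ → ℕ,
      ∀ (G : Type) [Group G] (N : Subgroup G) [N.Normal] (k c : ℕ),
        (⊤ : Subgroup N).lowerCentralSeries k = ⊥ →
        (⊤ : Subgroup (G ⧸ (⁅N, N⁆ : Subgroup G))).lowerCentralSeries c = ⊥ →
        (⊤ : Subgroup G).lowerCentralSeries (F k c) = ⊥ := by
  refine ⟨fun k c => c * (k + 2).choose 2, fun G _ N _ k c hN hQ => ?_⟩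
  have hNk : N.lowerCentralSeries k = ⊥ := by
    rw [← Subgroup.top_subtype_lowerCentralSeries, hN, Subgroup.map_bot]
  refine le_bot_iff.mp ?_
  calc (⊤ : Subgroup G).lowerCentralSeries (c * (k + 2).choose 2)
      ≤ N.lowerCentralSeries (k + 1) :=
        N.top_lowerCentralSeries_le_lowerCentralSeries
          (Subgroup.top_lowerCentralSeries_le_of_quotient hQ) k
    _ ≤ N.lowerCentralSeries k := N.lowerCentralSeries_antitone k.le_succ
    _ = ⊥ := hNk
end

section
/- Let G be a group, N ⊴ G a nilpotent normal subgroup of class 2, and suppose G/N' is nilpotent. Then G is nilpotent. -/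
/-!
Put `A₀ = N` and `Aₖ₊₁ = [Aₖ, G]`. Nilpotency of `G/N'` means `γ_d(G) ≤ N'` for some `d`, so
`Aᵢ ≤ N'` for `i ≥ d`, and `[N', N] = 1` gives `[Aᵢ, Aⱼ] = 1` whenever `i + j ≥ 2d`. The three
subgroups lemma, applied modulo the terms of the upper central series, gives
`[[Aᵢ, Aⱼ], G] ≤ [Aᵢ₊₁, Aⱼ][Aᵢ, Aⱼ₊₁]`, whence `[Aᵢ, Aⱼ] ≤ Z_m(G)` whenever `i + j + m ≥ 2d`.
In particular `γ_d(G) ≤ N' = [A₀, A₀] ≤ Z_{2d}(G)`, so `γ_{3d}(G) = 1`.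
-/

namespace Subgroup

variable {G : Type*} [Group G]

theorem commutator_commutator_le_of_rotate_s7 {A B C K : Subgroup G} [K.Normal]
    (h₁ : ⁅⁅B, C⁆, A⁆ ≤ K) (h₂ : ⁅⁅C, A⁆, B⁆ ≤ K) : ⁅⁅A, B⁆, C⁆ ≤ K := by
  have map_eq_bot {X Y Z : Subgroup G} (h : ⁅⁅X, Y⁆, Z⁆ ≤ K) :
      ⁅⁅X.map (QuotientGroup.mk' K), Y.map (QuotientGroup.mk' K)⁆,
        Z.map (QuotientGroup.mk' K)⁆ = ⊥ := by
    rwa [← map_commutator, ← map_commutator, map_eq_bot_iff, QuotientGroup.ker_mk']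
  simpa only [← map_commutator, map_eq_bot_iff, QuotientGroup.ker_mk'] using
    commutator_commutator_eq_bot_of_rotate (map_eq_bot h₁) (map_eq_bot h₂)

theorem commutator_top_le_upperCentralSeries_iff {H : Subgroup G} {n : ℕ} :
    ⁅H, ⊤⁆ ≤ upperCentralSeries G n ↔ H ≤ upperCentralSeries G (n + 1) :=
  ⟨fun h x hx y => commutator_le.mp h x hx y (mem_top y),
    fun h => (commutator_mono h le_rfl).trans (commutator_upperCentralSeries_top_le G n)⟩

theorem lowerCentralSeries_top_add_eq_bot {d m : ℕ}
    (h : lowerCentralSeries (⊤ : Subgroup G) d ≤ upperCentralSeries G m) :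
    lowerCentralSeries (⊤ : Subgroup G) (d + m) = ⊥ := by
  induction m generalizing d with
  | zero => exact le_bot_iff.mp h
  | succ m ih =>
    rw [← add_assoc, add_right_comm]
    exact ih (commutator_top_le_upperCentralSeries_iff.mpr h)

theorem lowerCentralSeries_top_le_of_quotient {N : Subgroup G} [N.Normal] {d : ℕ}
    (h : lowerCentralSeries (⊤ : Subgroup (G ⧸ N)) d = ⊥) :
    lowerCentralSeries (⊤ : Subgroup G) d ≤ N := by
  rwa [← QuotientGroup.ker_mk' N, ← map_eq_bot_iff, map_lowerCentralSeries,
    map_top_of_surjective _ (QuotientGroup.mk'_surjective N)]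

def iteratedCommutatorTop (N : Subgroup G) : ℕ → Subgroup G
  | 0 => N
  | k + 1 => ⁅iteratedCommutatorTop N k, ⊤⁆

variable (N : Subgroup G)

theorem iteratedCommutatorTop_le_lowerCentralSeries (k : ℕ) :
    iteratedCommutatorTop N k ≤ lowerCentralSeries ⊤ k := by
  induction k with
  | zero => exact le_top
  | succ k ih => exact commutator_mono ih le_rfl

theorem iteratedCommutatorTop_le_self [N.Normal] (k : ℕ) : iteratedCommutatorTop N k ≤ N := by
  induction k with
  | zero => exact le_rfl
  | succ k ih => exact (commutator_mono ih le_rfl).trans (commutator_le_left N ⊤)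

theorem commutator_iteratedCommutatorTop_le_upperCentralSeries {n : ℕ}
    (h : ∀ i j, n ≤ i + j → ⁅iteratedCommutatorTop N i, iteratedCommutatorTop N j⁆ = ⊥)
    (m : ℕ) : ∀ i j, n ≤ i + j + m →
      ⁅iteratedCommutatorTop N i, iteratedCommutatorTop N j⁆ ≤ upperCentralSeries G m := by
  induction m with
  | zero => exact fun i j hij => (h i j hij).le
  | succ m ih =>
    intro i j hij
    rw [← commutator_top_le_upperCentralSeries_iff]
    apply commutator_commutator_le_of_rotate_s7
    · rw [commutator_comm]
      exact ih i (j + 1) (by omega)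
    · rw [commutator_comm ⊤]
      exact ih (i + 1) j (by omega)

end Subgroup

/-- special case of P. Hall's theorem: if `N ⊴ G` is nilpotent
of class at most 2 and `G/N'` is nilpotent, then `G` is nilpotent. -/
theorem stmt7 (G : Type*) [Group G] (N : Subgroup G) [N.Normal]
    (hN : lowerCentralSeries N 2 = ⊥)
    (hQ : Group.IsNilpotent (G ⧸ (⁅N, N⁆ : Subgroup G))) :
    Group.IsNilpotent G := by
  obtain ⟨d, hd⟩ := Subgroup.nilpotent_iff_lowerCentralSeries.mp hQ
  have hdN : (⊤ : Subgroup G).lowerCentralSeries d ≤ ⁅N, N⁆ :=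
    Subgroup.lowerCentralSeries_top_le_of_quotient hd
  have hvanish (i j : ℕ) (hi : d ≤ i) :
      ⁅N.iteratedCommutatorTop i, N.iteratedCommutatorTop j⁆ = ⊥ :=
    le_bot_iff.mp <| (Subgroup.commutator_mono
      ((N.iteratedCommutatorTop_le_lowerCentralSeries i).trans
        ((Subgroup.lowerCentralSeries_antitone ⊤ hi).trans hdN))
      (N.iteratedCommutatorTop_le_self j)).trans hN.le
  have hcentral : ⁅N, N⁆ ≤ Subgroup.upperCentralSeries G (2 * d) := by
    refine N.commutator_iteratedCommutatorTop_le_upperCentralSeries (n := 2 * d)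
      (fun i j hij => ?_) (2 * d) 0 0 (by omega)
    rcases le_or_gt d i with hi | hi
    · exact hvanish i j hi
    · rw [Subgroup.commutator_comm]
      exact hvanish j i (by omega)
  exact Subgroup.nilpotent_iff_lowerCentralSeries.mpr
    ⟨d + 2 * d, Subgroup.lowerCentralSeries_top_add_eq_bot (hdN.trans hcentral)⟩
end

section
/- Let G be a group generated by elements t₁,…,t_d such that the normal closure of {t₁,…,t_d} generates G, and let k ≥ 2. Then every element of γ_k(G) can be written as [g₁,t₁]⋯[g_d,t_d] for some g_i ∈ γ_{k−1}(G), provided G = ⟨t₁,…,t_d⟩ and G is nilpotent (or finite). -/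
/-!
If `γ_{n+1}` is central, then `g ↦ ∏ [g i, t i]` is a homomorphism on `γ_nᵈ`, and for
`x ∈ γ_n` so is `w ↦ [x, w]` on `G`. The `w` for which `[x, w]` is such a product therefore form
a subgroup; it contains every `t i`, hence is all of `G`, and so every generator of
`γ_{n+1} = [γ_n, G]`, and with it all of `γ_{n+1}`, is such a product.
In general one inducts on the nilpotency class: a representation of `y` modulo the last non-trivial
term `γ_c` of the series lifts to `G`, and the error lies in the central subgroup `γ_c`, where
the first case writes it as `∏ [h i, t i]`, which is absorbed by `[h g, t] = [h, t] [g, t]`.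
-/

open Subgroup
open scoped commutatorElement

theorem List.prod_ofFn_mul_of_commute {M : Type*} [Monoid M] {n : ℕ} (f g : Fin n → M)
    (hf : ∀ i x, Commute (f i) x) :
    (List.ofFn fun i => f i * g i).prod = (List.ofFn f).prod * (List.ofFn g).prod := by
  induction n with
  | zero => simp
  | succ n ih =>
    have hc : Commute (g 0) (List.ofFn fun i => f i.succ).prod :=
      Commute.list_prod_right _ _ fun x hx => by
        obtain ⟨i, rfl⟩ := List.mem_ofFn.mp hx
        exact (hf i.succ _).symm
    simp only [List.ofFn_succ, List.prod_cons, ih _ _ fun i => hf i.succ]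
    rw [mul_assoc, hc.left_comm, ← mul_assoc]

theorem List.prod_ofFn_mulSingle {M : Type*} [Monoid M] {n : ℕ} (i : Fin n) (a : M) :
    (List.ofFn (Pi.mulSingle i a)).prod = a := by
  induction n with
  | zero => exact i.elim0
  | succ n ih =>
    cases i using Fin.cases with
    | zero => simp [List.ofFn_succ, Fin.succ_ne_zero]
    | succ i =>
      simp only [List.ofFn_succ, List.prod_cons, one_mul,
        Pi.mulSingle_eq_of_ne (Fin.succ_ne_zero i).symm]
      convert ih i using 3
      ext j
      simp [Pi.mulSingle_apply]

namespace Subgroup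

variable {G H : Type*} [Group G] [Group H]

theorem closure_range_comp_eq_top {ι : Type*} {t : ι → G} (hgen : closure (Set.range t) = ⊤)
    {f : G →* H} (hf : Function.Surjective f) :
    closure (Set.range (f ∘ t)) = ⊤ := by
  rw [Set.range_comp, ← MonoidHom.map_closure, hgen, map_top_of_surjective f hf]

theorem map_top_lowerCentralSeries_of_surjective {f : G →* H} (hf : Function.Surjective f)
    (n : ℕ) :
    ((⊤ : Subgroup G).lowerCentralSeries n).map f = (⊤ : Subgroup H).lowerCentralSeries n := by
  rw [map_lowerCentralSeries, map_top_of_surjective f hf]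

end Subgroup

namespace Segal

variable {G : Type*} [Group G]

/-- Segal's `[g, t]`, which is Mathlib's `⁅g⁻¹, t⁻¹⁆`. -/
def comm (g t : G) : G := g⁻¹ * t⁻¹ * g * t

theorem commutatorElement_eq_comm (g h : G) : ⁅g, h⁆ = comm g⁻¹ h⁻¹ := by
  simp [comm, commutatorElement_def]

theorem comm_one_left (t : G) : comm 1 t = 1 := by
  simp [comm]

theorem map_comm {H : Type*} [Group H] (f : G →* H) (g t : G) :
    f (comm g t) = comm (f g) (f t) := by
  simp [comm]

theorem comm_mem_lowerCentralSeries_succ {n : ℕ} {x : G}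
    (hx : x ∈ (⊤ : Subgroup G).lowerCentralSeries n) (w : G) :
    comm x w ∈ (⊤ : Subgroup G).lowerCentralSeries (n + 1) := by
  rw [← inv_inv x, ← inv_inv w, ← commutatorElement_eq_comm]
  exact commutator_mem_commutator (inv_mem hx) (mem_top w⁻¹)

theorem comm_mul_left {a b t : G} (h : comm a t ∈ center G) :
    comm (a * b) t = comm a t * comm b t :=
  calc comm (a * b) t = b⁻¹ * (comm a t * b) * comm b t := by simp only [comm]; group
    _ = comm a t * comm b t := by rw [← mem_center_iff.mp h b]; group

theorem comm_mul_right {x a b : G} (h : comm x a ∈ center G) :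
    comm x (a * b) = comm x a * comm x b :=
  calc comm x (a * b) = comm x b * (b⁻¹ * (comm x a * b)) := by simp only [comm]; group
    _ = comm x b * comm x a := by rw [← mem_center_iff.mp h b]; group
    _ = comm x a * comm x b := mem_center_iff.mp h _

variable {d : ℕ}

def commProd (g t : Fin d → G) : G := (List.ofFn fun i => comm (g i) (t i)).prod

theorem map_commProd {H : Type*} [Group H] (f : G →* H) (g t : Fin d → G) :
    f (commProd g t) = commProd (f ∘ g) (f ∘ t) := by
  simp [commProd, map_list_prod, List.map_ofFn, Function.comp_def, map_comm]

theorem commProd_mul_left {a b t : Fin d → G} (h : ∀ i, comm (a i) (t i) ∈ center G) :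
    commProd (a * b) t = commProd a t * commProd b t := by
  simp only [commProd, Pi.mul_apply, comm_mul_left (h _)]
  exact List.prod_ofFn_mul_of_commute _ _ fun i x => (mem_center_iff.mp (h i) x).symm

theorem commProd_mulSingle (i : Fin d) (x : G) (t : Fin d → G) :
    commProd (Pi.mulSingle i x) t = comm x (t i) := by
  rw [commProd, ← List.prod_ofFn_mulSingle i (comm x (t i))]
  congr 2
  ext j
  exact Pi.apply_mulSingle (fun j y => comm y (t j)) (fun j => comm_one_left _) i x j

theorem exists_commProd_of_le_center {n : ℕ} {t : Fin d → G}
    (hgen : closure (Set.range t) = ⊤)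
    (hZ : (⊤ : Subgroup G).lowerCentralSeries (n + 1) ≤ center G) :
    ∀ y ∈ (⊤ : Subgroup G).lowerCentralSeries (n + 1), ∃ g : Fin d → G,
      (∀ i, g i ∈ (⊤ : Subgroup G).lowerCentralSeries n) ∧ y = commProd g t := by
  have hcomm {x : G} (hx : x ∈ (⊤ : Subgroup G).lowerCentralSeries n) (w : G) :
      comm x w ∈ center G :=
    hZ (comm_mem_lowerCentralSeries_succ hx w)
  let Φ : (Fin d → (⊤ : Subgroup G).lowerCentralSeries n) →* G :=
    MonoidHom.mk' (fun g => commProd (fun i => (g i : G)) t)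
      fun a b => commProd_mul_left fun i => hcomm (a i).2 (t i)
  have hcomm_mem_range {x : G} (hx : x ∈ (⊤ : Subgroup G).lowerCentralSeries n) (w : G) :
      comm x w ∈ Φ.range := by
    let Ψ : G →* G := MonoidHom.mk' (comm x) fun a b => comm_mul_right (hcomm hx a)
    have hgen_le : closure (Set.range t) ≤ Φ.range.comap Ψ := by
      rw [closure_le]
      rintro _ ⟨i, rfl⟩
      refine ⟨Pi.mulSingle i ⟨x, hx⟩, ?_⟩
      show commProd _ t = comm x (t i)
      rw [← commProd_mulSingle i x t]
      congr 1
      ext j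
      exact Pi.apply_mulSingle (fun _ => Subtype.val) (fun _ => rfl) i _ j
    exact hgen_le (hgen ▸ mem_top w)
  have hle : (⊤ : Subgroup G).lowerCentralSeries (n + 1) ≤ Φ.range := by
    rw [Subgroup.lowerCentralSeries_succ, commutator_le]
    intro x hx w _
    rw [commutatorElement_eq_comm]
    exact hcomm_mem_range (inv_mem hx) w⁻¹
  intro y hy
  obtain ⟨g, rfl⟩ := hle hy
  exact ⟨fun i => g i, fun i => (g i).2, rfl⟩

theorem exists_commProd_of_lowerCentralSeries_eq_bot {t : Fin d → G}
    (hgen : closure (Set.range t) = ⊤) (m n : ℕ)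
    (hγ : (⊤ : Subgroup G).lowerCentralSeries (m + n + 2) = ⊥) :
    ∀ y ∈ (⊤ : Subgroup G).lowerCentralSeries (m + 1), ∃ g : Fin d → G,
      (∀ i, g i ∈ (⊤ : Subgroup G).lowerCentralSeries m) ∧ y = commProd g t := by
  induction n generalizing G with
  | zero =>
    exact exists_commProd_of_le_center hgen (commutator_top_right_eq_bot_iff_le_center.mp hγ)
  | succ n ih =>
    intro y hy
    set N := (⊤ : Subgroup G).lowerCentralSeries (m + n + 2)
    have hNZ : N ≤ center G := commutator_top_right_eq_bot_iff_le_center.mp hγ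
    let π := QuotientGroup.mk' N
    have hπ : Function.Surjective π := QuotientGroup.mk'_surjective N
    have hγQ : (⊤ : Subgroup (G ⧸ N)).lowerCentralSeries (m + n + 2) = ⊥ := by
      rw [← map_top_lowerCentralSeries_of_surjective hπ, Subgroup.map_eq_bot_iff,
        QuotientGroup.ker_mk']
    obtain ⟨gQ, hgQ, hyQ⟩ := ih (closure_range_comp_eq_top hgen hπ) hγQ (π y)
      (map_top_lowerCentralSeries_of_surjective hπ (m + 1) ▸ mem_map_of_mem π hy)
    choose g hg hπg using fun i => (map_top_lowerCentralSeries_of_surjective hπ m ▸ hgQ i :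
      gQ i ∈ ((⊤ : Subgroup G).lowerCentralSeries m).map π)
    have hyz : y * (commProd g t)⁻¹ ∈ N := by
      rw [← div_eq_mul_inv, ← QuotientGroup.eq_iff_div_mem]
      change π y = π (commProd g t)
      rw [hyQ, map_commProd, ← funext hπg]
      rfl
    obtain ⟨h, hh, hz⟩ := exists_commProd_of_le_center hgen hNZ _ hyz
    refine ⟨h * g, fun i =>
      mul_mem (Subgroup.lowerCentralSeries_antitone _ (by omega) (hh i)) (hg i), ?_⟩
    rw [commProd_mul_left fun i => hNZ (comm_mem_lowerCentralSeries_succ (hh i) (t i)), ← hz]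
    group

end Segal

/-- Segal, Prop. 1.2.7: if a nilpotent group `G` is generated by
`t₁,…,t_d` and `k ≥ 2`, then every element of `γ_k(G)` can be written as
`[g₁,t₁]⋯[g_d,t_d]` with `g_i ∈ γ_{k-1}(G)`, where `[g,t] = g⁻¹t⁻¹gt`.
(In Mathlib's indexing, `γ_k(G) = lowerCentralSeries G (k-1)`.) -/
theorem stmt10 (G : Type*) [Group G] (hnil : Group.IsNilpotent G)
    (d : ℕ) (t : Fin d → G) (hgen : Subgroup.closure (Set.range t) = ⊤)
    (k : ℕ) (hk : 2 ≤ k) :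
    ∀ y ∈ (⊤ : Subgroup G).lowerCentralSeries (k - 1), ∃ g : Fin d → G,
      (∀ i, g i ∈ (⊤ : Subgroup G).lowerCentralSeries (k - 2)) ∧
      y = (List.ofFn fun i : Fin d => (g i)⁻¹ * (t i)⁻¹ * g i * t i).prod := by
  obtain ⟨c, hc⟩ := Subgroup.nilpotent_iff_lowerCentralSeries.mp hnil
  obtain ⟨m, rfl⟩ : ∃ m, k = m + 2 := ⟨k - 2, by omega⟩
  have hγ : (⊤ : Subgroup G).lowerCentralSeries (m + c + 2) = ⊥ :=
    eq_bot_iff.mpr (hc ▸ Subgroup.lowerCentralSeries_antitone _ (by omega))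
  exact Segal.exists_commProd_of_lowerCentralSeries_eq_bot hgen m c hγ
end

section
/- Let G be a group, A = K/L an abelian normal section of G, and u, t ∈ G elements whose images commute modulo A. If a monic polynomial f ∈ ℤ[X] satisfies that f((t^u)^{-1}) and f(t) act as the zero endomorphism on A (in the conjugation action), then there is a monic polynomial h ∈ ℤ[X], depending only on f, such that h([u,t]) acts as the zero endomorphism on A. -/
/-!
If `α` and `β` are roots of a monic `f` in a commutative ring, then `αβ` is a root of the
characteristic polynomial `h` of multiplication by `root f ⊗ root f` on
`R[X]/(f) ⊗ R[X]/(f)`: by Cayley–Hamilton `root f ⊗ root f` is a root of `h`, and the algebra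
map sending the two roots to `α` and `β` carries it to `αβ`. Commuting elements of any algebra
generate a commutative subalgebra, so the same holds for commuting roots. Finally
`[u,t] = (t^u)⁻¹ t`, and the actions of `(t^u)⁻¹` and `t` are commuting roots of `f` in `End A`.
-/

open Polynomial TensorProduct

namespace Polynomial

variable {R : Type*} [CommRing R]

noncomputable def mulRootsPoly (f : R[X]) (hf : f.Monic) : R[X] :=
  letI := hf.free_adjoinRoot
  letI := hf.finite_adjoinRoot
  (Algebra.lmul R (AdjoinRoot f ⊗[R] AdjoinRoot f)
    (AdjoinRoot.root f ⊗ₜ AdjoinRoot.root f)).charpoly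

theorem mulRootsPoly_monic (f : R[X]) (hf : f.Monic) : (mulRootsPoly f hf).Monic :=
  have := hf.free_adjoinRoot
  have := hf.finite_adjoinRoot
  LinearMap.charpoly_monic _

theorem aeval_root_tmul_root_mulRootsPoly (f : R[X]) (hf : f.Monic) :
    aeval (AdjoinRoot.root f ⊗ₜ[R] AdjoinRoot.root f) (mulRootsPoly f hf) = 0 := by
  have := hf.free_adjoinRoot
  have := hf.finite_adjoinRoot
  have h : aeval (Algebra.lmul R _ (AdjoinRoot.root f ⊗ₜ[R] AdjoinRoot.root f))
      (mulRootsPoly f hf) = 0 :=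
    LinearMap.aeval_self_charpoly _
  rw [aeval_algHom_apply] at h
  simpa using congrArg (· 1) h

theorem aeval_mul_mulRootsPoly {S : Type*} [CommRing S] [Algebra R S] (f : R[X])
    (hf : f.Monic) {a b : S} (ha : aeval a f = 0) (hb : aeval b f = 0) :
    aeval (a * b) (mulRootsPoly f hf) = 0 := by
  let ψ := Algebra.TensorProduct.lift (AdjoinRoot.liftAlgHom f (Algebra.ofId R S) a ha)
    (AdjoinRoot.liftAlgHom f (Algebra.ofId R S) b hb) fun _ _ => Commute.all _ _
  have hψ : ψ (AdjoinRoot.root f ⊗ₜ AdjoinRoot.root f) = a * b := by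
    rw [Algebra.TensorProduct.lift_tmul]
    exact congr_arg₂ (· * ·) (AdjoinRoot.liftAlgHom_root ..) (AdjoinRoot.liftAlgHom_root ..)
  rw [← hψ, aeval_algHom_apply, aeval_root_tmul_root_mulRootsPoly, map_zero]

open scoped IsMulCommutative in
theorem aeval_mul_mulRootsPoly_of_commute {S : Type*} [Ring S] [Algebra R S] (f : R[X])
    (hf : f.Monic) {a b : S} (hab : Commute a b) (ha : aeval a f = 0) (hb : aeval b f = 0) :
    aeval (a * b) (mulRootsPoly f hf) = 0 := by
  have := Algebra.isMulCommutative_adjoin R (s := {a, b}) <| by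
    rintro x (rfl | rfl) y (rfl | rfl)
    exacts [rfl, hab.eq, hab.eq.symm, rfl]
  let a' : Algebra.adjoin R {a, b} := ⟨a, Algebra.subset_adjoin (by simp)⟩
  let b' : Algebra.adjoin R {a, b} := ⟨b, Algebra.subset_adjoin (by simp)⟩
  have ha' : aeval a' f = 0 := Subtype.ext <| by rw [aeval_subalgebra_coe]; exact ha
  have hb' : aeval b' f = 0 := Subtype.ext <| by rw [aeval_subalgebra_coe]; exact hb
  have h := congrArg Subtype.val (aeval_mul_mulRootsPoly f hf ha' hb')
  rwa [aeval_subalgebra_coe] at h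

end Polynomial

/-- Let `f ∈ ℤ[X]` be monic. There is a monic `h ∈ ℤ[X]`,
depending only on `f`, such that the following holds. Whenever a group `G`
acts by automorphisms on an abelian group `A` (the conjugation action on an
abelian normal section, encoded as `φ : G →* (End A)ˣ`), and `u, t ∈ G` are
such that the actions of `t^u = u⁻¹tu` and `t` on `A` commute, and both
`f((t^u)⁻¹)` and `f(t)` are the zero endomorphism of `A`, then
`h([u,t])` is the zero endomorphism of `A`, where `[u,t] = u⁻¹t⁻¹ut`. -/
theorem stmt11 (f : Polynomial ℤ) (hf : f.Monic) :
    ∃ h : Polynomial ℤ, h.Monic ∧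
      ∀ (G A : Type) [Group G] [AddCommGroup A]
        (φ : G →* (AddMonoid.End A)ˣ) (u t : G),
        Commute ((φ (u⁻¹ * t * u) : (AddMonoid.End A)ˣ) : AddMonoid.End A)
          ((φ t : (AddMonoid.End A)ˣ) : AddMonoid.End A) →
        Polynomial.aeval
          ((φ ((u⁻¹ * t * u)⁻¹) : (AddMonoid.End A)ˣ) : AddMonoid.End A) f = 0 →
        Polynomial.aeval ((φ t : (AddMonoid.End A)ˣ) : AddMonoid.End A) f = 0 →
        Polynomial.aeval
          ((φ (u⁻¹ * t⁻¹ * u * t) : (AddMonoid.End A)ˣ) : AddMonoid.End A) h = 0 := by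
  refine ⟨mulRootsPoly f hf, mulRootsPoly_monic f hf, ?_⟩
  intro G A _ _ φ u t hcomm hconj ht
  have hcommutator : u⁻¹ * t⁻¹ * u * t = (u⁻¹ * t * u)⁻¹ * t := by group
  rw [hcommutator, map_mul, Units.val_mul]
  refine aeval_mul_mulRootsPoly_of_commute f hf ?_ hconj ht
  rw [map_inv]
  exact hcomm.units_inv_left
end
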